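/- arXiv:2403.04572 — 2 statements merged into one kernel-verified Lean document; each statement's English description precedes it below -/
import Mathlib

section
/- Let V and W be finite-dimensional complex inner product spaces with dim V = dim W = d, and let |σ⟩ ∈ V ⊗ W be a vector of Schmidt rank d (i.e., maximal rank). Then for any nonzero vector of the form u ⊗ |σ⟩ ⊗ w in U ⊗ (V ⊗ W) ⊗ X (with u ∈ U, w ∈ X nonzero), and indeed for any nonzero vector in the subspace (U ⊗ ℂ|σ⟩ ⊗ X), the Schmidt rank with respect to the bipartition (U ⊗ V) versus (W ⊗ X) is at least d. -/
open TensorProduct Module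

noncomputable section

/-- The Schmidt rank of a vector in a tensor product: the minimal number of product vectors
needed to express it. -/
def schmidtRank {V W : Type} [AddCommGroup V] [Module ℂ V] [AddCommGroup W] [Module ℂ W]
    (v : V ⊗[ℂ] W) : ℕ :=
  sInf {n | ∃ (a : Fin n → V) (b : Fin n → W), v = ∑ i, a i ⊗ₜ[ℂ] b i}

/-- The regrouping `U ⊗ (V ⊗ W) ⊗ X ≃ (U ⊗ V) ⊗ (W ⊗ X)`. -/
def regroup (U V W X : Type) [AddCommGroup U] [Module ℂ U] [AddCommGroup V] [Module ℂ V]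
    [AddCommGroup W] [Module ℂ W] [AddCommGroup X] [Module ℂ X] :
    (U ⊗[ℂ] (V ⊗[ℂ] W)) ⊗[ℂ] X ≃ₗ[ℂ] (U ⊗[ℂ] V) ⊗[ℂ] (W ⊗[ℂ] X) :=
  (TensorProduct.congr (TensorProduct.assoc ℂ U V W).symm (LinearEquiv.refl ℂ X)).trans
    (TensorProduct.assoc ℂ (U ⊗[ℂ] V) W X)

lemma exists_fin_repr {V W : Type} [AddCommGroup V] [Module ℂ V] [AddCommGroup W] [Module ℂ W]
    (v : V ⊗[ℂ] W) : ∃ (n : ℕ) (a : Fin n → V) (b : Fin n → W), v = ∑ i, a i ⊗ₜ[ℂ] b i := by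
  induction v using TensorProduct.induction_on with
  | zero => exact ⟨0, ![], ![], by simp⟩
  | tmul x y => exact ⟨1, ![x], ![y], by simp⟩
  | add x y hx hy =>
    obtain ⟨n, a, b, rfl⟩ := hx
    obtain ⟨m, c, d, rfl⟩ := hy
    exact ⟨n + m, Fin.append a c, Fin.append b d, by
      rw [Fin.sum_univ_add]; simp [Fin.append_left, Fin.append_right]⟩

lemma separation {U X : Type} [AddCommGroup U] [Module ℂ U] [AddCommGroup X] [Module ℂ X]
    (s : U ⊗[ℂ] X) (h : ∀ (φ : U →ₗ[ℂ] ℂ) (ψ : X →ₗ[ℂ] ℂ),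
      ((TensorProduct.lid ℂ ℂ).toLinearMap ∘ₗ TensorProduct.map φ ψ) s = 0) : s = 0 := by
  let bU := Basis.ofVectorSpace ℂ U
  let bX := Basis.ofVectorSpace ℂ X
  let b := bU.tensorProduct bX
  have hco : ∀ i j, ((TensorProduct.lid ℂ ℂ).toLinearMap ∘ₗ
      TensorProduct.map (bU.coord i) (bX.coord j)) = b.coord (i, j) := by
    intro i j
    apply b.ext
    rintro ⟨i', j'⟩
    simp [b, Basis.tensorProduct_apply, Basis.coord_apply, Basis.repr_self,
      Finsupp.single_apply, Prod.ext_iff, ite_and, mul_ite, mul_one, mul_zero, mul_comm]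
  have h1 : ∀ p : _ × _, b.repr s p = 0 := by
    rintro ⟨i, j⟩
    have := h (bU.coord i) (bX.coord j)
    rw [hco i j] at this
    simpa [Basis.coord_apply] using this
  simpa using b.repr.map_eq_zero_iff.mp (Finsupp.ext h1)

/-- If `|σ⟩ ∈ V ⊗ W` has maximal Schmidt rank `d = dim V = dim W`, then every nonzero vector in
the subspace `U ⊗ ℂ|σ⟩ ⊗ X` (in particular every nonzero `u ⊗ |σ⟩ ⊗ w`) has Schmidt rank at
least `d` with respect to the bipartition `(U ⊗ V) | (W ⊗ X)`. -/
theorem schmidtRank_ge_of_maximal_core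
    {U X : Type} [AddCommGroup U] [Module ℂ U] [FiniteDimensional ℂ U] [Nontrivial U]
    [AddCommGroup X] [Module ℂ X] [FiniteDimensional ℂ X] [Nontrivial X]
    {V W : Type} [NormedAddCommGroup V] [InnerProductSpace ℂ V] [FiniteDimensional ℂ V]
    [NormedAddCommGroup W] [InnerProductSpace ℂ W] [FiniteDimensional ℂ W]
    (d : ℕ) (hV : finrank ℂ V = d) (hW : finrank ℂ W = d)
    (σ : V ⊗[ℂ] W) (hσ : schmidtRank σ = d) :
    ∀ t ∈ Submodule.span ℂ
        {x : (U ⊗[ℂ] (V ⊗[ℂ] W)) ⊗[ℂ] X | ∃ (u : U) (w : X), x = (u ⊗ₜ[ℂ] σ) ⊗ₜ[ℂ] w},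
      t ≠ 0 → d ≤ schmidtRank (regroup U V W X t) := by
  intro t ht htne
  -- a finite representation of t as ∑ (uᵢ ⊗ σ) ⊗ wᵢ
  have hrep : ∃ (n : ℕ) (u : Fin n → U) (w : Fin n → X),
      t = ∑ i, (u i ⊗ₜ[ℂ] σ) ⊗ₜ[ℂ] w i := by
    clear htne
    induction ht using Submodule.span_induction with
    | mem x hx => obtain ⟨u, w, rfl⟩ := hx; exact ⟨1, ![u], ![w], by simp⟩
    | zero => exact ⟨0, ![], ![], by simp⟩
    | add x y _ _ hx hy =>
      obtain ⟨n, u, w, rfl⟩ := hx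
      obtain ⟨m, u', w', rfl⟩ := hy
      exact ⟨n + m, Fin.append u u', Fin.append w w', by
        rw [Fin.sum_univ_add]; simp [Fin.append_left, Fin.append_right]⟩
    | smul c x _ hx =>
      obtain ⟨n, u, w, rfl⟩ := hx
      refine ⟨n, fun i => c • u i, w, ?_⟩
      rw [Finset.smul_sum]
      simp [smul_tmul']
  obtain ⟨n, u, w, hrep⟩ := hrep
  set s : U ⊗[ℂ] X := ∑ i, u i ⊗ₜ[ℂ] w i with hs_def
  have hGs : (TensorProduct.map ((TensorProduct.mk ℂ U (V ⊗[ℂ] W)).flip σ)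
      (LinearMap.id (R := ℂ) (M := X))) s = t := by
    rw [hs_def, map_sum, hrep]
    simp [TensorProduct.map_tmul]
  have hs0 : s ≠ 0 := fun h0 => htne (by rw [← hGs, h0, map_zero])
  obtain ⟨φ, ψ, hc⟩ : ∃ (φ : U →ₗ[ℂ] ℂ) (ψ : X →ₗ[ℂ] ℂ), (∑ i, φ (u i) * ψ (w i)) ≠ 0 := by
    by_contra h
    push_neg at h
    refine hs0 (separation s fun φ ψ => ?_)
    rw [hs_def, map_sum]
    simpa [TensorProduct.map_tmul, TensorProduct.lid_tmul, smul_eq_mul] using h φ ψ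
  set c : ℂ := ∑ i, φ (u i) * ψ (w i) with hc_def
  set φV : U ⊗[ℂ] V →ₗ[ℂ] V :=
    (TensorProduct.lid ℂ V).toLinearMap ∘ₗ TensorProduct.map φ LinearMap.id with hφV
  set ψW : W ⊗[ℂ] X →ₗ[ℂ] W :=
    (TensorProduct.rid ℂ W).toLinearMap ∘ₗ TensorProduct.map LinearMap.id ψ with hψW
  have key : ∀ (u₀ : U) (x₀ : X) (τ : V ⊗[ℂ] W),
      TensorProduct.map φV ψW (regroup U V W X ((u₀ ⊗ₜ[ℂ] τ) ⊗ₜ[ℂ] x₀))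
        = (φ u₀ * ψ x₀) • τ := by
    intro u₀ x₀ τ
    induction τ using TensorProduct.induction_on with
    | zero => simp
    | tmul v w' =>
      simp [regroup, hφV, hψW, TensorProduct.congr_tmul, TensorProduct.assoc_symm_tmul,
        TensorProduct.assoc_tmul, TensorProduct.map_tmul, TensorProduct.lid_tmul,
        TensorProduct.rid_tmul, smul_tmul', tmul_smul, smul_smul, mul_comm]
    | add τ₁ τ₂ h1 h2 =>
      rw [tmul_add, add_tmul, map_add, map_add, h1, h2, smul_add]
  have hM : TensorProduct.map φV ψW (regroup U V W X t) = c • σ := by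
    rw [hrep, map_sum, map_sum]
    rw [hc_def, Finset.sum_smul]
    exact Finset.sum_congr rfl fun i _ => key (u i) (w i) σ
  refine le_csInf ?_ ?_
  · obtain ⟨m, a, b, h⟩ := exists_fin_repr (regroup U V W X t)
    exact ⟨m, a, b, h⟩
  · rintro m ⟨a, b, hab⟩
    have h2 : c • σ = ∑ i, φV (a i) ⊗ₜ[ℂ] ψW (b i) := by
      rw [← hM, hab, map_sum]
      simp [TensorProduct.map_tmul]
    have h3 : σ = ∑ i, (c⁻¹ • φV (a i)) ⊗ₜ[ℂ] ψW (b i) := by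
      have : σ = c⁻¹ • (c • σ) := by rw [smul_smul, inv_mul_cancel₀ hc, one_smul]
      rw [this, h2, Finset.smul_sum]
      simp [smul_tmul']
    calc d = schmidtRank σ := hσ.symm
      _ ≤ m := Nat.sInf_le ⟨_, _, h3⟩
end
end

section
/- Let G be a finite group and let λ, τ, σ be irreducible complex representations of G with σ one-dimensional. If the multiplicity of σ in λ ⊗ τ is positive, then the vector (unique up to scalar) spanning the σ-isotypic component of λ ⊗ τ has maximal Schmidt rank dim λ = dim τ with respect to the tensor factorization λ ⊗ τ. -/
open Module TensorProduct

noncomputable section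

/-- The space of intertwiners between two representations. -/
def repHom {W₁ W₂ : Type} [AddCommGroup W₁] [Module ℂ W₁] [AddCommGroup W₂] [Module ℂ W₂]
    {K : Type} [Group K] (ρ₁ : Representation ℂ K W₁) (ρ₂ : Representation ℂ K W₂) :
    Submodule ℂ (W₁ →ₗ[ℂ] W₂) where
  carrier := {T | ∀ k : K, T.comp (ρ₁ k) = (ρ₂ k).comp T}
  add_mem' := by
    intro T₁ T₂ h₁ h₂ k
    ext v
    simp [LinearMap.add_comp, LinearMap.comp_add, h₁ k, h₂ k]
  zero_mem' := by intro k; simp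
  smul_mem' := by
    intro c T hT k
    ext v
    simp [LinearMap.smul_comp, LinearMap.comp_smul, hT k]

/-- Irreducibility of a representation. -/
def RepIsIrreducible {W : Type} [AddCommGroup W] [Module ℂ W] {K : Type} [Group K]
    (ρ : Representation ℂ K W) : Prop :=
  Nontrivial W ∧
    ∀ p : Submodule ℂ W, (∀ (k : K) (x : W), x ∈ p → ρ k x ∈ p) → p = ⊥ ∨ p = ⊤

variable {M N : Type} [AddCommGroup M] [Module ℂ M] [AddCommGroup N] [Module ℂ N]

def tmap : M ⊗[ℂ] N →ₗ[ℂ] (Module.Dual ℂ N →ₗ[ℂ] M) :=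
  TensorProduct.lift (LinearMap.mk₂ ℂ (fun m n => ((Module.Dual.eval ℂ N) n).smulRight m)
    (by intros; ext; simp [smul_add])
    (by intro c m n; ext φ; simp only [LinearMap.smulRight_apply, LinearMap.smul_apply, Module.Dual.eval_apply]; rw [smul_comm])
    (by intros; ext; simp [add_smul])
    (by intros; ext; simp [mul_smul]))

@[simp] lemma tmap_tmul (m : M) (n : N) (φ : Module.Dual ℂ N) :
    tmap (m ⊗ₜ[ℂ] n) φ = φ n • m := rfl

lemma exists_basis_decomp [FiniteDimensional ℂ M] (v : M ⊗[ℂ] N) :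
    ∃ c : Fin (finrank ℂ M) → N, v = ∑ i, (finBasis ℂ M) i ⊗ₜ[ℂ] c i := by
  induction v using TensorProduct.induction_on with
  | zero => exact ⟨0, by simp⟩
  | tmul m n =>
      refine ⟨fun i => (finBasis ℂ M).repr m i • n, ?_⟩
      conv_lhs => rw [← (finBasis ℂ M).sum_repr m]
      rw [sum_tmul]
      exact Finset.sum_congr rfl fun i _ => by
        rw [TensorProduct.smul_tmul]
  | add x y hx hy =>
      obtain ⟨c, hc⟩ := hx; obtain ⟨d, hd⟩ := hy
      exact ⟨c + d, by simp [hc, hd, TensorProduct.tmul_add, Finset.sum_add_distrib]⟩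

lemma tmap_eq_zero [FiniteDimensional ℂ M] {v : M ⊗[ℂ] N} (h : tmap v = 0) : v = 0 := by
  obtain ⟨c, rfl⟩ := exists_basis_decomp (N := N) v
  have hc : ∀ i, c i = 0 := by
    intro i
    rw [← Module.forall_dual_apply_eq_zero_iff ℂ (c i)]
    intro φ
    have h0 : tmap (∑ j, (finBasis ℂ M) j ⊗ₜ[ℂ] c j) φ = 0 := by rw [h]; rfl
    rw [map_sum] at h0
    simp only [LinearMap.sum_apply, tmap_tmul] at h0
    have := congrArg (fun x => (finBasis ℂ M).repr x i) h0
    simpa [Finsupp.single_apply, Finset.sum_ite_eq'] using this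
  simp [hc]

lemma tmap_tprod {K : Type} [Group K] (ρ : Representation ℂ K M) (σr : Representation ℂ K N)
    (g : K) (v : M ⊗[ℂ] N) (φ : Module.Dual ℂ N) :
    tmap ((ρ.tprod σr) g v) φ = ρ g (tmap v (φ ∘ₗ (σr g))) := by
  induction v using TensorProduct.induction_on with
  | zero => simp
  | tmul m n => simp [Representation.tprod_apply]
  | add x y hx hy => simp_all

lemma tmap_range_top {K : Type} [Group K] [FiniteDimensional ℂ M] [FiniteDimensional ℂ N]
    (ρ : Representation ℂ K M) (σr : Representation ℂ K N)
    (hρ : RepIsIrreducible ρ) (χ : K → ℂ) (v : M ⊗[ℂ] N) (hv0 : v ≠ 0)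
    (hvv : ∀ g, (ρ.tprod σr) g v = χ g • v) :
    LinearMap.range (tmap v) = ⊤ := by
  have key : ∀ (g : K) (φ : Module.Dual ℂ N), ρ g (tmap v (φ ∘ₗ σr g)) = χ g • tmap v φ := by
    intro g φ; rw [← tmap_tprod, hvv]; simp
  have hinv : ∀ (g : K) (x : M), x ∈ LinearMap.range (tmap v) → ρ g x ∈ LinearMap.range (tmap v) := by
    rintro g x ⟨φ, rfl⟩
    have hφ : φ = (φ ∘ₗ σr g⁻¹) ∘ₗ σr g := by
      ext w
      simp only [LinearMap.comp_apply]
      rw [← Module.End.mul_apply, ← map_mul, inv_mul_cancel, map_one, Module.End.one_apply]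
    rw [hφ, key g (φ ∘ₗ σr g⁻¹)]
    exact Submodule.smul_mem _ _ ⟨_, rfl⟩
  rcases hρ.2 _ hinv with h | h
  · exact absurd (tmap_eq_zero (LinearMap.range_eq_bot.mp h)) hv0
  · exact h


/-- If a one-dimensional representation `sig` occurs in the tensor product `lam ⊗ tau` of
irreducible representations of a finite group, then any nonzero vector spanning the
`sig`-isotypic component of `lam ⊗ tau` has maximal Schmidt rank `dim lam = dim tau` with
respect to the tensor factorization. -/
theorem isotypic_vector_maximal_schmidt_rank
    {G : Type} [Group G] [Fintype G]
    {V W L : Type} [AddCommGroup V] [Module ℂ V] [FiniteDimensional ℂ V]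
    [AddCommGroup W] [Module ℂ W] [FiniteDimensional ℂ W]
    [AddCommGroup L] [Module ℂ L] [FiniteDimensional ℂ L]
    (lam : Representation ℂ G V) (tau : Representation ℂ G W) (sig : Representation ℂ G L)
    (hlam : RepIsIrreducible lam) (htau : RepIsIrreducible tau) (hsigirr : RepIsIrreducible sig)
    (hsig : finrank ℂ L = 1)
    (hocc : ∃ T ∈ repHom sig (lam.tprod tau), T ≠ 0) :
    ∀ χ : G → ℂ, (∀ (g : G) (x : L), sig g x = χ g • x) →
      ∀ v : V ⊗[ℂ] W, v ≠ 0 → (∀ g : G, (lam.tprod tau) g v = χ g • v) →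
        schmidtRank v = finrank ℂ V ∧ finrank ℂ V = finrank ℂ W := by
  intro χ _ v hv0 hvv
  have h1 : LinearMap.range (tmap v) = ⊤ := tmap_range_top lam tau hlam χ v hv0 hvv
  set v' : W ⊗[ℂ] V := TensorProduct.comm ℂ V W v with hv'
  have hcommnat : ∀ (g : G) (u : V ⊗[ℂ] W),
      TensorProduct.comm ℂ V W ((lam.tprod tau) g u) = (tau.tprod lam) g (TensorProduct.comm ℂ V W u) := by
    intro g u
    induction u using TensorProduct.induction_on with
    | zero => simp
    | tmul m n => simp [Representation.tprod_apply]
    | add x y hx hy => simp_all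
  have hvv' : ∀ g, (tau.tprod lam) g v' = χ g • v' := by
    intro g; rw [hv', ← hcommnat, hvv]; simp
  have hv0' : v' ≠ 0 := by
    intro h
    exact hv0 ((LinearEquiv.map_eq_zero_iff _).mp h)
  have h2 : LinearMap.range (tmap v') = ⊤ := tmap_range_top tau lam htau χ v' hv0' hvv'
  have d1 : finrank ℂ V ≤ finrank ℂ W := by
    have h := LinearMap.finrank_range_le (tmap v)
    rw [h1, finrank_top] at h
    simpa using h
  have d2 : finrank ℂ W ≤ finrank ℂ V := by
    have h := LinearMap.finrank_range_le (tmap v')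
    rw [h2, finrank_top] at h
    simpa using h
  obtain ⟨c, hc⟩ := exists_basis_decomp (N := W) v
  have hub : schmidtRank v ≤ finrank ℂ V := Nat.sInf_le ⟨_, c, hc⟩
  have hne : {n | ∃ (a : Fin n → V) (b : Fin n → W), v = ∑ i, a i ⊗ₜ[ℂ] b i}.Nonempty :=
    ⟨_, _, c, hc⟩
  obtain ⟨a, b, hab⟩ := Nat.sInf_mem hne
  have hlb : finrank ℂ V ≤ schmidtRank v := by
    classical
    haveI : Fintype (Set.range a) := Set.fintypeRange a
    have hle : LinearMap.range (tmap v) ≤ Submodule.span ℂ (Set.range a) := by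
      rintro x ⟨φ, rfl⟩
      have heq : tmap v φ = ∑ i, φ (b i) • a i := by
        conv_lhs => rw [hab]
        rw [map_sum]
        simp only [LinearMap.sum_apply, tmap_tmul]
      rw [heq]
      exact Submodule.sum_mem _ fun i _ =>
        Submodule.smul_mem _ _ (Submodule.subset_span ⟨i, rfl⟩)
    calc finrank ℂ V = finrank ℂ (LinearMap.range (tmap v)) := by rw [h1, finrank_top]
      _ ≤ finrank ℂ (Submodule.span ℂ (Set.range a)) := Submodule.finrank_mono hle
      _ ≤ (Set.range a).toFinset.card := finrank_span_le_card _
      _ ≤ schmidtRank v := by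
          rw [Set.toFinset_card]
          simpa [schmidtRank] using Fintype.card_range_le a
  exact ⟨le_antisymm hub hlb, le_antisymm d1 d2⟩
end
end
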